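/- arXiv:2108.11925 — 2 statements merged into one kernel-verified Lean document; each statement's English description precedes it below -/
import Mathlib

section
/- Let q > 0 and φ(x) = cos²(πx/q) for |x| < q/2, extended by 0. Then for all |x| ≤ q: (φ*φ)(x) ≤ 3q/8 − (5/4)·x²/q whenever |x| < q/2, and for a ∈ (1/2, 1], with m = ((φ*φ)(aq) − (φ*φ)(q/2))/(aq − q/2), one has (φ*φ)(x) ≤ q/16 + (|x| − q/2)·m whenever q/2 ≤ |x| ≤ aq. -/
open MeasureTheory Real

/-- The Hann window of width `q`. -/
noncomputable def hann (q x : ℝ) : ℝ := if |x| < q / 2 then Real.cos (Real.pi * x / q) ^ 2 else 0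

/-- Autoconvolution of the Hann window over `ℝ`. -/
noncomputable def hconv (q x : ℝ) : ℝ := ∫ y : ℝ, hann q y * hann q (x - y)

/-!
Rescaling `y ↦ y / q` gives `hconv q x = q * g (|x| / q)`, where on `[0, 1]` the normalized
autoconvolution `g = hconvProfile` has an elementary primitive: expand `cos² A * cos² B` into
cosines of `2A`, `2B` and `2A ± 2B`, and note that `2A + 2B` does not depend on `y`.

The parabola `3/8 - 5/4 * u²` touches `g` at both `u = 0` and `u = 1/2`, so the first bound comes
from Taylor bounds for `cos` and `sin` at `0` on `[0, 3/10]` and at `1/2` on `[3/10, 1/2]`.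

For the second bound, `g'' = π/4 * (sin θ - θ cos θ) ≥ 0` with `θ = 2π(1 - u) ∈ [0, π]`, so `g` is
convex on `[1/2, 1]` and lies below its chords there; moreover `g (1/2) = 1/16`.
-/

lemma monotoneOn_Ici_of_hasDerivAt_nonneg {f f' : ℝ → ℝ} {a : ℝ}
    (hf : ∀ x, HasDerivAt f (f' x) x) (hf' : ∀ x, a < x → 0 ≤ f' x) : MonotoneOn f (Set.Ici a) :=
  monotoneOn_of_hasDerivWithinAt_nonneg (convex_Ici a)
    (continuous_iff_continuousAt.2 fun x => (hf x).continuousAt).continuousOn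
    (fun x _ => (hf x).hasDerivWithinAt)
    (by rw [interior_Ici]; exact hf')

lemma Real.cos_le_one_sub_sq_div_two_add_pow_four {x : ℝ} (hx : 0 ≤ x) :
    cos x ≤ 1 - x ^ 2 / 2 + x ^ 4 / 24 := by
  have hmono : MonotoneOn (fun x => 1 - x ^ 2 / 2 + x ^ 4 / 24 - cos x) (Set.Ici 0) := by
    refine monotoneOn_Ici_of_hasDerivAt_nonneg (f' := fun x => -x + x ^ 3 / 6 + sin x)
      (fun x => ?_) (fun x hx => by linarith [sin_ge_sub_cube hx.le])
    refine ((((hasDerivAt_pow 2 x).div_const 2).const_sub 1).add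
      ((hasDerivAt_pow 4 x).div_const 24)).sub (hasDerivAt_cos x) |>.congr_deriv ?_
    norm_num
    ring
  simpa using hmono Set.self_mem_Ici hx hx

lemma Real.sin_le_sub_cube_add_pow_five {x : ℝ} (hx : 0 ≤ x) :
    sin x ≤ x - x ^ 3 / 6 + x ^ 5 / 120 := by
  have hmono : MonotoneOn (fun x => x - x ^ 3 / 6 + x ^ 5 / 120 - sin x) (Set.Ici 0) := by
    refine monotoneOn_Ici_of_hasDerivAt_nonneg (f' := fun x => 1 - x ^ 2 / 2 + x ^ 4 / 24 - cos x)
      (fun x => ?_) (fun x hx => by linarith [cos_le_one_sub_sq_div_two_add_pow_four hx.le])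
    refine (((hasDerivAt_id x).sub ((hasDerivAt_pow 3 x).div_const 6)).add
      ((hasDerivAt_pow 5 x).div_const 120)).sub (hasDerivAt_sin x) |>.congr_deriv ?_
    norm_num
    ring
  simpa using hmono Set.self_mem_Ici hx hx

lemma Real.mul_cos_le_sin {θ : ℝ} (hθ₀ : 0 ≤ θ) (hθπ : θ ≤ π) : θ * cos θ ≤ sin θ := by
  rcases lt_or_ge θ (π / 2) with hθ | hθ
  · have hcos : 0 < cos θ := cos_pos_of_mem_Ioo ⟨by linarith [pi_pos], hθ⟩
    have htan := le_tan hθ₀ hθ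
    rwa [tan_eq_sin_div_cos, le_div_iff₀ hcos] at htan
  · nlinarith [cos_nonpos_of_pi_div_two_le_of_le hθ (by linarith [pi_pos]),
      sin_nonneg_of_nonneg_of_le_pi hθ₀ hθπ]

lemma ConvexOn.le_add_mul_slope {s : Set ℝ} {f : ℝ → ℝ} (hf : ConvexOn ℝ s f) {a b x : ℝ}
    (ha : a ∈ s) (hb : b ∈ s) (hax : a ≤ x) (hxb : x ≤ b) :
    f x ≤ f a + (x - a) * ((f b - f a) / (b - a)) := by
  rcases hax.eq_or_lt with rfl | hax
  · simp
  have hx : x ∈ s := hf.1.ordConnected.out ha hb ⟨hax.le, hxb⟩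
  have hslope := hf.secant_mono ha hx hb hax.ne' (by linarith) hxb
  have := mul_le_mul_of_nonneg_left hslope (sub_nonneg.2 hax.le)
  rwa [mul_div_cancel₀ _ (sub_ne_zero.2 hax.ne'), sub_le_iff_le_add'] at this

lemma hann_neg (q x : ℝ) : hann q (-x) = hann q x := by
  rw [hann, hann, abs_neg, mul_neg, neg_div, cos_neg]

lemma hann_eq_hann_one_div {q : ℝ} (hq : 0 < q) (x : ℝ) : hann q x = hann 1 (x / q) := by
  have hcond : |x| / q < 1 / 2 ↔ |x| < q / 2 := by
    rw [div_lt_iff₀ hq]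
    constructor <;> intro h <;> linarith
  simp only [hann, abs_div, abs_of_pos hq, hcond, div_one, mul_div_assoc]

lemma hconv_neg (q x : ℝ) : hconv q (-x) = hconv q x := by
  rw [hconv, hconv, ← integral_neg_eq_self]
  congr 1 with y
  rw [neg_sub_neg, ← neg_sub, hann_neg, hann_neg]

lemma hconv_abs (q x : ℝ) : hconv q |x| = hconv q x := by
  rcases abs_choice x with h | h <;> rw [h]
  exact hconv_neg q x

lemma hconv_eq_mul_hconv_one {q : ℝ} (hq : 0 < q) (x : ℝ) : hconv q x = q * hconv 1 (x / q) := by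
  simp only [hconv, hann_eq_hann_one_div hq, sub_div]
  rw [Measure.integral_comp_div (fun y => hann 1 y * hann 1 (x / q - y)), abs_of_pos hq,
    smul_eq_mul]

noncomputable def hconvProfile (u : ℝ) : ℝ :=
  (1 - u) / 4 * (1 + cos (2 * π * u) / 2) + 3 / (16 * π) * sin (2 * π * u)

lemma hann_one_mul_hann_one_sub_eq_indicator {u : ℝ} (hu : 0 ≤ u) :
    (fun y => hann 1 y * hann 1 (u - y)) =
      (Set.Ioo (u - 1 / 2) (1 / 2)).indicator fun y => cos (π * y) ^ 2 * cos (π * (u - y)) ^ 2 := by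
  ext y
  by_cases hy : y ∈ Set.Ioo (u - 1 / 2) (1 / 2)
  · have h1 : |y| < 1 / 2 := abs_lt.2 ⟨by linarith [hy.1], hy.2⟩
    have h2 : |u - y| < 1 / 2 := abs_lt.2 ⟨by linarith [hy.2], by linarith [hy.1]⟩
    rw [Set.indicator_of_mem hy, hann, hann, if_pos h1, if_pos h2, div_one, div_one]
  · have : ¬ (|y| < 1 / 2 ∧ |u - y| < 1 / 2) := fun ⟨h1, h2⟩ =>
      hy ⟨by linarith [(abs_lt.1 h2).2], (abs_lt.1 h1).2⟩
    rw [Set.indicator_of_notMem hy, hann, hann]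
    rcases not_and_or.1 this with h | h <;> simp only [if_neg h, zero_mul, mul_zero]

lemma hasDerivAt_cos_sq_mul_cos_sq_primitive (u y : ℝ) :
    HasDerivAt (fun y => y / 4 + cos (2 * π * u) / 8 * y + sin (2 * π * y) / (8 * π)
        + sin (2 * π * (y - u)) / (8 * π) + sin (2 * π * (2 * y - u)) / (32 * π))
      (cos (π * y) ^ 2 * cos (π * (u - y)) ^ 2) y := by
  have h1 := ((hasDerivAt_id' y).const_mul (2 * π)).sin
  have h2 := (((hasDerivAt_id' y).sub_const u).const_mul (2 * π)).sin
  have h3 := ((((hasDerivAt_id' y).const_mul 2).sub_const u).const_mul (2 * π)).sin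
  refine (((((hasDerivAt_id' y).div_const 4).add ((hasDerivAt_id' y).const_mul _)).add
    (h1.div_const _)).add (h2.div_const _)).add (h3.div_const _) |>.congr_deriv ?_
  set A := π * y
  set B := π * (u - y)
  rw [show 2 * π * u = 2 * A + 2 * B by ring, show 2 * π * y = 2 * A by ring,
    show 2 * π * (y - u) = -(2 * B) by ring, show 2 * π * (2 * y - u) = 2 * A - 2 * B by ring,
    cos_neg, cos_add, cos_sub, cos_two_mul, cos_two_mul]
  field_simp
  ring

lemma integral_cos_sq_mul_cos_sq (u : ℝ) :
    ∫ y in (u - 1 / 2)..(1 / 2), cos (π * y) ^ 2 * cos (π * (u - y)) ^ 2 = hconvProfile u := by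
  rw [intervalIntegral.integral_eq_sub_of_hasDerivAt
    (fun y _ => hasDerivAt_cos_sq_mul_cos_sq_primitive u y)
    (Continuous.intervalIntegrable (by fun_prop) _ _)]
  rw [show 2 * π * (1 / 2) = π by ring, show 2 * π * (1 / 2 - u) = π - 2 * π * u by ring,
    show 2 * π * (2 * (1 / 2) - u) = 2 * π - 2 * π * u by ring,
    show 2 * π * (u - 1 / 2) = 2 * π * u - π by ring,
    show 2 * π * (u - 1 / 2 - u) = -π by ring,
    show 2 * π * (2 * (u - 1 / 2) - u) = 2 * π * u - 2 * π by ring,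
    sin_pi, sin_pi_sub, sin_two_pi_sub, sin_sub_pi, sin_neg, sin_pi, sin_sub_two_pi, hconvProfile]
  field_simp
  ring

lemma hconv_one_eq_hconvProfile {u : ℝ} (hu₀ : 0 ≤ u) (hu₁ : u ≤ 1) :
    hconv 1 u = hconvProfile u := by
  rw [hconv, hann_one_mul_hann_one_sub_eq_indicator hu₀, integral_indicator measurableSet_Ioo,
    ← integral_Ioc_eq_integral_Ioo, ← intervalIntegral.integral_of_le (by linarith),
    integral_cos_sq_mul_cos_sq]

lemma hconv_eq_mul_hconvProfile {q x : ℝ} (hq : 0 < q) (hx₀ : 0 ≤ x) (hx₁ : x ≤ q) :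
    hconv q x = q * hconvProfile (x / q) := by
  rw [hconv_eq_mul_hconv_one hq,
    hconv_one_eq_hconvProfile (div_nonneg hx₀ hq.le) ((div_le_one hq).2 hx₁)]

lemma hconvProfile_one_half : hconvProfile (1 / 2) = 1 / 16 := by
  rw [hconvProfile, show 2 * π * (1 / 2) = π by ring, cos_pi, sin_pi]
  ring

lemma hconvProfile_le_of_le_three_tenths {u : ℝ} (hu₀ : 0 ≤ u) (hu₁ : u ≤ 3 / 10) :
    hconvProfile u ≤ 3 / 8 - 5 / 4 * u ^ 2 := by
  have ht : 0 ≤ 2 * π * u := by positivity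
  have hπ4 : π ^ 4 * u ^ 2 / 12 ≤ π ^ 2 / 4 - 5 / 4 := by
    have := pi_gt_d2
    have := pi_lt_d2
    have : π ^ 2 ≤ 9.9225 := by nlinarith
    have : π ^ 4 ≤ 98.5 := by nlinarith
    have : u ^ 2 ≤ 9 / 100 := by nlinarith
    nlinarith
  calc hconvProfile u
      ≤ (1 - u) / 4 * (1 + (1 - (2 * π * u) ^ 2 / 2 + (2 * π * u) ^ 4 / 24) / 2)
        + 3 / (16 * π) * (2 * π * u - (2 * π * u) ^ 3 / 6 + (2 * π * u) ^ 5 / 120) := by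
        unfold hconvProfile
        gcongr
        · linarith
        · exact cos_le_one_sub_sq_div_two_add_pow_four ht
        · exact sin_le_sub_cube_add_pow_five ht
    _ = 3 / 8 - π ^ 2 * u ^ 2 / 4 + π ^ 4 * u ^ 4 / 12 - π ^ 4 * u ^ 5 / 30 := by
        field_simp
        ring
    _ ≤ 3 / 8 - 5 / 4 * u ^ 2 := by
        have := mul_le_mul_of_nonneg_left hπ4 (sq_nonneg u)
        have : 0 ≤ π ^ 4 * u ^ 5 := by positivity
        nlinarith

lemma hconvProfile_le_of_three_tenths_le {u : ℝ} (hu₀ : 3 / 10 ≤ u) (hu₁ : u ≤ 1 / 2) :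
    hconvProfile u ≤ 3 / 8 - 5 / 4 * u ^ 2 := by
  obtain ⟨v, rfl⟩ : ∃ v, u = 1 / 2 - v := ⟨1 / 2 - u, by ring⟩
  have hv : 0 ≤ 2 * π * v := by nlinarith [pi_pos]
  calc hconvProfile (1 / 2 - v)
      = (1 / 2 + v) / 4 * (1 - cos (2 * π * v) / 2) + 3 / (16 * π) * sin (2 * π * v) := by
        rw [hconvProfile, show 2 * π * (1 / 2 - v) = π - 2 * π * v by ring, cos_pi_sub,
          sin_pi_sub]
        ring
    _ ≤ (1 / 2 + v) / 4 * (1 - (1 - (2 * π * v) ^ 2 / 2) / 2) + 3 / (16 * π) * (2 * π * v) := by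
        gcongr
        · linarith
        · exact one_sub_sq_div_two_le_cos
        · exact sin_le hv
    _ = 1 / 16 + v / 2 + π ^ 2 * v ^ 2 / 8 + π ^ 2 * v ^ 3 / 4 := by
        field_simp
        ring
    _ ≤ 3 / 8 - 5 / 4 * (1 / 2 - v) ^ 2 := by
        have hπv : π ^ 2 * v ≤ 2 := by nlinarith [pi_lt_d2, pi_pos]
        nlinarith

lemma hconvProfile_le {u : ℝ} (hu₀ : 0 ≤ u) (hu₁ : u ≤ 1 / 2) :
    hconvProfile u ≤ 3 / 8 - 5 / 4 * u ^ 2 :=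
  (le_total u (3 / 10)).elim (hconvProfile_le_of_le_three_tenths hu₀)
    (hconvProfile_le_of_three_tenths_le · hu₁)

lemma hasDerivAt_hconvProfile (u : ℝ) :
    HasDerivAt hconvProfile
      (-1 / 4 + cos (2 * π * u) / 4 - π * (1 - u) * sin (2 * π * u) / 4) u := by
  have hc := ((hasDerivAt_id' u).const_mul (2 * π)).cos
  have hs := ((hasDerivAt_id' u).const_mul (2 * π)).sin
  refine ((((hasDerivAt_id' u).const_sub 1).div_const 4).mul ((hc.div_const 2).const_add 1)).add
    (hs.const_mul _) |>.congr_deriv ?_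
  field_simp
  ring

lemma hasDerivAt_hconvProfile_deriv (u : ℝ) :
    HasDerivAt (fun u => -1 / 4 + cos (2 * π * u) / 4 - π * (1 - u) * sin (2 * π * u) / 4)
      (-π * sin (2 * π * u) / 4 - π ^ 2 * (1 - u) * cos (2 * π * u) / 2) u := by
  have hc := ((hasDerivAt_id' u).const_mul (2 * π)).cos
  have hs := ((hasDerivAt_id' u).const_mul (2 * π)).sin
  refine (((hc.div_const 4).const_add _).sub
    ((((hasDerivAt_id' u).const_sub 1).const_mul π).mul hs |>.div_const 4)) |>.congr_deriv ?_
  ring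

lemma convexOn_hconvProfile : ConvexOn ℝ (Set.Icc (1 / 2) 1) hconvProfile := by
  refine convexOn_of_hasDerivWithinAt2_nonneg (convex_Icc _ _)
    (continuous_iff_continuousAt.2 fun u => (hasDerivAt_hconvProfile u).continuousAt).continuousOn
    (fun u _ => (hasDerivAt_hconvProfile u).hasDerivWithinAt)
    (fun u _ => (hasDerivAt_hconvProfile_deriv u).hasDerivWithinAt) ?_
  intro u hu
  rw [interior_Icc] at hu
  have hθ := mul_cos_le_sin (θ := 2 * π * (1 - u)) (by nlinarith [pi_pos, hu.2])
    (by nlinarith [pi_pos, hu.1])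
  rw [show 2 * π * (1 - u) = 2 * π - 2 * π * u by ring, cos_two_pi_sub, sin_two_pi_sub] at hθ
  nlinarith [mul_le_mul_of_nonneg_left hθ pi_pos.le]

lemma convexOn_hconv {q : ℝ} (hq : 0 < q) : ConvexOn ℝ (Set.Icc (q / 2) q) (hconv q) := by
  have h := (convexOn_hconvProfile.comp_linearMap (q⁻¹ • LinearMap.id)).smul hq.le
  have hs : (q⁻¹ • LinearMap.id : ℝ →ₗ[ℝ] ℝ) ⁻¹' Set.Icc (1 / 2) 1 = Set.Icc (q / 2) q := by
    ext x
    simp only [Set.mem_preimage, LinearMap.smul_apply, LinearMap.id_apply, smul_eq_mul,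
      Set.mem_Icc, le_inv_mul_iff₀ hq, inv_mul_le_iff₀ hq, mul_one, mul_one_div]
  rw [hs] at h
  refine h.congr fun x hx => ?_
  rw [hconv_eq_mul_hconvProfile hq (by linarith [hx.1]) hx.2]
  simp [div_eq_inv_mul]

theorem hann_autoconv_upper_bounds (q : ℝ) (hq : 0 < q) :
    (∀ x : ℝ, |x| < q / 2 → hconv q x ≤ 3 * q / 8 - 5 / 4 * x ^ 2 / q) ∧
    (∀ a : ℝ, a ∈ Set.Ioc (1 / 2 : ℝ) 1 → ∀ x : ℝ, q / 2 ≤ |x| → |x| ≤ a * q →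
      hconv q x ≤ q / 16 +
        (|x| - q / 2) * ((hconv q (a * q) - hconv q (q / 2)) / (a * q - q / 2))) := by
  constructor
  · intro x hx
    rw [← hconv_abs, hconv_eq_mul_hconvProfile hq (abs_nonneg x) (by linarith)]
    calc q * hconvProfile (|x| / q) ≤ q * (3 / 8 - 5 / 4 * (|x| / q) ^ 2) := by
          gcongr
          exact hconvProfile_le (by positivity) ((div_le_iff₀ hq).2 (by linarith))
      _ = 3 * q / 8 - 5 / 4 * x ^ 2 / q := by
          rw [div_pow, sq_abs]
          field_simp
  · rintro a ⟨ha₀, ha₁⟩ x hx₀ hx₁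
    have hhalf : hconv q (q / 2) = q / 16 := by
      rw [hconv_eq_mul_hconvProfile hq (by positivity) (by linarith),
        show q / 2 / q = 1 / 2 by field_simp, hconvProfile_one_half]
      ring
    rw [← hconv_abs, ← hhalf]
    exact (convexOn_hconv hq).le_add_mul_slope ⟨le_rfl, by linarith⟩ ⟨by nlinarith, by nlinarith⟩
      hx₀ hx₁
end

section
/- Let q > 0 and define the sequence a₀ = 1, a_{k+1} = 3/(4 − 4m_k) where m_k = ((φ*φ)(a_k q) − (φ*φ)(q/2))/(a_k q − q/2) and φ is the Hann window of width q. Then a_k ∈ [1/2, 1] for all k, the sequence (a_k) is nonincreasing, and a_k → 1/2 as k → ∞. -/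
open MeasureTheory Real Filter

/-- The sequence `a₀ = 1`, `a_{k+1} = 3/(4 − 4 m_k)` where
`m_k` is the chord slope of `φ*φ` between `q/2` and `a_k q`. -/
noncomputable def aSeq (q : ℝ) : ℕ → ℝ
  | 0 => 1
  | k + 1 =>
      3 / (4 - 4 * ((hconv q (aSeq q k * q) - hconv q (q / 2)) / (aSeq q k * q - q / 2)))

/-!
On `[0, q]` the autoconvolution has the closed form
`(φ*φ)(x) = ((q - x)(1 + cos(2πx/q)/2) + 3q/(4π) sin(2πx/q)) / 4`.
Writing `a = 1/2 + s` and `θ = 2πs`, the chord slope `m` from `q/2` satisfies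
`8πs (1 + 2m) = (π - θ)(1 - cos θ) + 3(θ - sin θ)`, and the Taylor bounds for `cos` and `sin`
give `-1/2 < m ≤ 0` and `1 + 2m ≤ π² s / 4`. Since `3/(4 - 4m) - 1/2 = (1 + 2m)/(4 - 4m)`,
the distance of `a_k` to `1/2` contracts by the factor `π²/16 < 1` at every step.
-/

open Set

lemma cos_sq_mul_cos_sq (A B : ℝ) :
    cos A ^ 2 * cos B ^ 2 =
      (1 + cos (2 * (A + B)) / 2 + cos (2 * A) + cos (2 * B) + cos (2 * A - 2 * B) / 2) / 4 := by
  simp only [two_mul, cos_add, cos_sub, sin_add]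
  nlinarith [sin_sq_add_cos_sq A, sin_sq_add_cos_sq B]

lemma hann_mul_hann_sub {q x : ℝ} (hx : 0 ≤ x) :
    (fun y ↦ hann q y * hann q (x - y)) =
      (Ioo (x - q / 2) (q / 2)).indicator
        fun y ↦ cos (π * y / q) ^ 2 * cos (π * (x - y) / q) ^ 2 := by
  ext y
  simp only [hann, indicator_apply, mem_Ioo, abs_lt]
  split_ifs <;> grind

lemma hconv_eq_intervalIntegral {q x : ℝ} (hx0 : 0 ≤ x) (hxq : x ≤ q) :
    hconv q x = ∫ y in (x - q / 2)..(q / 2), cos (π * y / q) ^ 2 * cos (π * (x - y) / q) ^ 2 := by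
  rw [hconv, hann_mul_hann_sub hx0, integral_indicator measurableSet_Ioo,
    intervalIntegral.integral_of_le (by linarith), integral_Ioc_eq_integral_Ioo]

lemma hasDerivAt_hconv_antideriv {q : ℝ} (hq : q ≠ 0) (x y : ℝ) :
    HasDerivAt
      (fun y ↦ (y * (1 + cos (2 * π * x / q) / 2) + q / (2 * π) * sin (2 * π * y / q)
        - q / (2 * π) * sin (2 * π * (x - y) / q)
        + q / (8 * π) * sin ((4 * π * y - 2 * π * x) / q)) / 4)
      (cos (π * y / q) ^ 2 * cos (π * (x - y) / q) ^ 2) y := by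
  have hπ : π ≠ 0 := pi_ne_zero
  have h := (((((hasDerivAt_id y).mul_const (1 + cos (2 * π * x / q) / 2)).add
    ((((hasDerivAt_id y).const_mul (2 * π)).div_const q).sin.const_mul (q / (2 * π)))).sub
    (((((hasDerivAt_id y).const_sub x).const_mul (2 * π)).div_const q).sin.const_mul
      (q / (2 * π)))).add
    (((((hasDerivAt_id y).const_mul (4 * π)).sub_const (2 * π * x)).div_const q).sin.const_mul
      (q / (8 * π)))).div_const 4
  refine h.congr_deriv ?_
  rw [cos_sq_mul_cos_sq, show π * y / q + π * (x - y) / q = π * x / q by ring]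
  simp only [id]
  field_simp
  ring_nf

theorem hconv_eq {q x : ℝ} (hq : 0 < q) (hx0 : 0 ≤ x) (hxq : x ≤ q) :
    hconv q x = ((q - x) * (1 + cos (2 * π * x / q) / 2)
      + 3 * q / (4 * π) * sin (2 * π * x / q)) / 4 := by
  rw [hconv_eq_intervalIntegral hx0 hxq, intervalIntegral.integral_eq_sub_of_hasDerivAt
    (fun y _ ↦ hasDerivAt_hconv_antideriv hq.ne' x y) (Continuous.intervalIntegrable
      (by fun_prop) _ _)]
  have hπ : π ≠ 0 := pi_ne_zero
  rw [show 2 * π * (q / 2) / q = π by field_simp,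
    show 2 * π * (x - q / 2) / q = 2 * π * x / q - π by field_simp,
    show 2 * π * (x - (x - q / 2)) / q = π by field_simp; ring,
    show (4 * π * (q / 2) - 2 * π * x) / q = -(2 * π * x / q - 2 * π) by field_simp; ring,
    show (4 * π * (x - q / 2) - 2 * π * x) / q = 2 * π * x / q - 2 * π by field_simp; ring]
  simp only [sin_pi, sin_sub_pi, sin_sub_two_pi, sin_neg]
  field_simp
  ring

theorem hconv_half {q : ℝ} (hq : 0 < q) : hconv q (q / 2) = q / 16 := by
  rw [hconv_eq hq (by positivity) (by linarith),
    show 2 * π * (q / 2) / q = π by field_simp, sin_pi, cos_pi]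
  ring

/-- `8πs (1 + 2m)`, where `m` is the chord slope of `hconv q` between `q/2` and `(1/2 + s) q`
and `θ = 2πs`. -/
noncomputable def hannGap (θ : ℝ) : ℝ := (π - θ) * (1 - cos θ) + 3 * (θ - sin θ)

lemma one_add_two_mul_slope_hconv {q a : ℝ} (hq : 0 < q) (ha0 : 0 ≤ a) (ha1 : a ≤ 1)
    (ha : a ≠ 1 / 2) :
    1 + 2 * slope (hconv q) (q / 2) (a * q) =
      hannGap (2 * π * (a - 1 / 2)) / (8 * π * (a - 1 / 2)) := by
  have hπ : π ≠ 0 := pi_ne_zero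
  obtain ⟨s, rfl⟩ : ∃ s, a = 1 / 2 + s := ⟨a - 1 / 2, by ring⟩
  have hs : s ≠ 0 := by simpa using ha
  rw [slope_def_field, hconv_half hq, hconv_eq hq (by positivity) (by nlinarith),
    show 2 * π * ((1 / 2 + s) * q) / q = 2 * π * s + π by field_simp; ring, cos_add_pi,
    sin_add_pi, add_sub_cancel_left, hannGap]
  field_simp
  ring

lemma hannGap_pos {θ : ℝ} (h0 : 0 < θ) (hπ : θ ≤ π) : 0 < hannGap θ := by
  have := sin_lt h0
  have := cos_le_one θ
  unfold hannGap
  nlinarith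

lemma hannGap_le_mul_sq {θ : ℝ} (h0 : 0 ≤ θ) (hπ : θ ≤ π) : hannGap θ ≤ π * θ ^ 2 / 2 := by
  have := sin_ge_sub_cube h0
  have := one_sub_sq_div_two_le_cos (x := θ)
  unfold hannGap
  nlinarith

lemma hannGap_le {θ : ℝ} (h0 : 0 ≤ θ) (hπ : θ ≤ π) : hannGap θ ≤ 4 * θ := by
  -- Up to `2π/3` the quadratic bound suffices because `π² < 12`; beyond, `1 - cos θ ≤ 2`.
  rcases le_or_gt θ (2 * π / 3) with hθ | hθ
  · have := pi_lt_d2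
    nlinarith [hannGap_le_mul_sq h0 hπ]
  · have := neg_one_le_cos θ
    have := sin_nonneg_of_nonneg_of_le_pi h0 hπ
    unfold hannGap
    nlinarith

lemma slope_hconv_mem_Ioc {q a : ℝ} (hq : 0 < q) (ha0 : 1 / 2 < a) (ha1 : a ≤ 1) :
    slope (hconv q) (q / 2) (a * q) ∈ Ioc (-(1 / 2)) 0 := by
  have h := one_add_two_mul_slope_hconv hq (by linarith) ha1 ha0.ne'
  have hθ : 0 < 2 * π * (a - 1 / 2) := by have := pi_pos; nlinarith
  have hθπ : 2 * π * (a - 1 / 2) ≤ π := by have := pi_pos; nlinarith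
  have hpos := div_pos (hannGap_pos hθ hθπ) (by linarith : 0 < 8 * π * (a - 1 / 2))
  have hle : hannGap (2 * π * (a - 1 / 2)) / (8 * π * (a - 1 / 2)) ≤ 1 := by
    rw [div_le_iff₀ (by linarith)]
    linarith [hannGap_le hθ.le hθπ]
  constructor <;> linarith

lemma one_add_two_mul_slope_hconv_le {q a : ℝ} (hq : 0 < q) (ha0 : 1 / 2 < a) (ha1 : a ≤ 1) :
    1 + 2 * slope (hconv q) (q / 2) (a * q) ≤ π ^ 2 / 4 * (a - 1 / 2) := by
  have hθ : 0 < 2 * π * (a - 1 / 2) := by have := pi_pos; nlinarith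
  have hθπ : 2 * π * (a - 1 / 2) ≤ π := by have := pi_pos; nlinarith
  rw [one_add_two_mul_slope_hconv hq (by linarith) ha1 ha0.ne', div_le_iff₀ (by linarith)]
  calc hannGap (2 * π * (a - 1 / 2)) ≤ π * (2 * π * (a - 1 / 2)) ^ 2 / 2 :=
        hannGap_le_mul_sq hθ.le hθπ
    _ = π ^ 2 / 4 * (a - 1 / 2) * (8 * π * (a - 1 / 2)) := by ring

lemma three_div_mem_Ioc {m : ℝ} (hm : m ∈ Ioc (-(1 / 2)) 0) :
    3 / (4 - 4 * m) ∈ Ioc (1 / 2) 1 := by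
  obtain ⟨hm0, hm1⟩ := hm
  constructor
  · rw [lt_div_iff₀ (by linarith)]; linarith
  · rw [div_le_one (by linarith)]; linarith

lemma three_div_sub_half_le {m : ℝ} (hm0 : -(1 / 2) ≤ m) (hm1 : m ≤ 0) :
    3 / (4 - 4 * m) - 1 / 2 ≤ (1 + 2 * m) / 4 := by
  rw [show 3 / (4 - 4 * m) - 1 / 2 = (1 + 2 * m) / (4 - 4 * m) by
    field_simp [show 1 - m ≠ 0 by linarith]; ring]
  exact div_le_div_of_nonneg_left (by linarith) (by norm_num) (by linarith)

lemma tendsto_of_sub_le_mul_sub {u : ℕ → ℝ} {l ρ : ℝ} (hρ0 : 0 ≤ ρ) (hρ1 : ρ < 1)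
    (hl : ∀ k, l ≤ u k) (h : ∀ k, u (k + 1) - l ≤ ρ * (u k - l)) :
    Tendsto u atTop (nhds l) := by
  have hgeom (k : ℕ) : u k - l ≤ ρ ^ k * (u 0 - l) :=
    le_geom (u := fun k ↦ u k - l) hρ0 k fun j _ ↦ h j
  have hlim : Tendsto (fun k ↦ l + ρ ^ k * (u 0 - l)) atTop (nhds l) := by
    simpa using ((tendsto_pow_atTop_nhds_zero_of_lt_one hρ0 hρ1).mul_const (u 0 - l)).const_add l
  exact tendsto_of_tendsto_of_tendsto_of_le_of_le tendsto_const_nhds hlim hl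
    fun k ↦ by linarith [hgeom k]

lemma antitone_of_sub_le_mul_sub {u : ℕ → ℝ} {l ρ : ℝ} (hρ : ρ ≤ 1)
    (hl : ∀ k, l ≤ u k) (h : ∀ k, u (k + 1) - l ≤ ρ * (u k - l)) : Antitone u :=
  antitone_nat_of_succ_le fun k ↦ by nlinarith [h k, hl k]

lemma aSeq_succ (q : ℝ) (k : ℕ) :
    aSeq q (k + 1) = 3 / (4 - 4 * slope (hconv q) (q / 2) (aSeq q k * q)) := by
  rw [slope_def_field]
  rfl

lemma aSeq_mem_Ioc {q : ℝ} (hq : 0 < q) : ∀ k, aSeq q k ∈ Ioc (1 / 2) 1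
  | 0 => by norm_num [aSeq]
  | k + 1 => by
    rw [aSeq_succ]
    exact three_div_mem_Ioc (slope_hconv_mem_Ioc hq (aSeq_mem_Ioc hq k).1 (aSeq_mem_Ioc hq k).2)

lemma aSeq_succ_sub_half_le {q : ℝ} (hq : 0 < q) (k : ℕ) :
    aSeq q (k + 1) - 1 / 2 ≤ π ^ 2 / 16 * (aSeq q k - 1 / 2) := by
  obtain ⟨ha0, ha1⟩ := aSeq_mem_Ioc hq k
  obtain ⟨hm0, hm1⟩ := slope_hconv_mem_Ioc hq ha0 ha1
  rw [aSeq_succ]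
  calc _ ≤ (1 + 2 * slope (hconv q) (q / 2) (aSeq q k * q)) / 4 :=
        three_div_sub_half_le hm0.le hm1
    _ ≤ π ^ 2 / 4 * (aSeq q k - 1 / 2) / 4 := by
        gcongr
        exact one_add_two_mul_slope_hconv_le hq ha0 ha1
    _ = π ^ 2 / 16 * (aSeq q k - 1 / 2) := by ring

theorem aSeq_tendsto_half (q : ℝ) (hq : 0 < q) :
    (∀ k : ℕ, aSeq q k ∈ Set.Icc (1 / 2 : ℝ) 1) ∧
    Antitone (aSeq q) ∧
    Tendsto (aSeq q) atTop (nhds (1 / 2)) := by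
  have hl (k : ℕ) : 1 / 2 ≤ aSeq q k := (aSeq_mem_Ioc hq k).1.le
  have hρ : π ^ 2 / 16 < 1 := by nlinarith [pi_lt_four, pi_pos]
  exact ⟨fun k ↦ Ioc_subset_Icc_self (aSeq_mem_Ioc hq k),
    antitone_of_sub_le_mul_sub hρ.le hl (aSeq_succ_sub_half_le hq),
    tendsto_of_sub_le_mul_sub (by positivity) hρ hl (aSeq_succ_sub_half_le hq)⟩
end
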